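/- Let A be a k×k matrix over R with det(A) ≠ 0. Then the set of associated primes of M_A = R^k/AR^k is exactly the set of ideals ⟨π⟩ where π ranges over the irreducible elements of R dividing det(A). In particular every associated prime of M_A is principal. -/

import Mathlib

/-!
`R` is the localization of `ℤ[u₁, …, u_d]` at `u₁ ⋯ u_d`, hence a Noetherian UFD, and the statement
holds for every square matrix `A` with `det A ≠ 0` over a Noetherian UFD.

If `P = Ann(x̄)` is an associated prime, then `p ∈ P` iff `det A` divides every entry of
`p • adj(A) x`. Some entry `c` of `adj(A) x` is not divisible by `det A` (else `x ∈ A R^k`), so `P`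
lies in the principal ideal of the non-unit `det A / gcd(det A, c)`; a nonzero prime ideal inside a
proper principal ideal of a UFD is generated by a prime element.

Conversely, a prime `π ∣ det A` is a zero divisor on `M_A`: otherwise, writing `det A = π^e m` with
`π ∤ m`, multiplication by `m` would kill `M_A`, which forces `det A ∣ m^k` and so `π ∣ m`. Hence `π`
lies in some associated prime, which is principal and must be `⟨π⟩`.
-/

noncomputable section

/-- The ring `R = ℤ[u₁^{±1},…,u_d^{±1}]`, realized as the group algebra of `ℤ^d` over `ℤ`. -/
abbrev LaurentR (d : ℕ) : Type := AddMonoidAlgebra ℤ (Fin d → ℤ)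

/-- The submodule `A·R^k ⊆ R^k` generated by the columns of the `k × k` matrix `A`. -/
def colSpan {d k n : ℕ} (A : Matrix (Fin k) (Fin n) (LaurentR d)) :
    Submodule (LaurentR d) (Fin k → LaurentR d) :=
  Submodule.span (LaurentR d) (Set.range fun j i => A i j)

/-- The module `M_A = R^k / A·R^k`. -/
abbrev MA {d k n : ℕ} (A : Matrix (Fin k) (Fin n) (LaurentR d)) : Type :=
  (Fin k → LaurentR d) ⧸ colSpan A

namespace LaurentR

variable (d : ℕ)

def natCastExponent : (Fin d →₀ ℕ) →+ (Fin d → ℤ) where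
  toFun e i := e i
  map_zero' := by ext; simp
  map_add' _ _ := by ext; simp

theorem natCastExponent_injective : Function.Injective (natCastExponent d) :=
  fun _ _ h => Finsupp.ext fun i => by simpa [natCastExponent] using congrFun h i

theorem exists_natCastExponent_eq_add (g : Fin d → ℤ) :
    ∃ (N : ℕ) (e : Fin d →₀ ℕ), natCastExponent d e = g + N • 1 := by
  refine ⟨∑ i, (g i).natAbs, Finsupp.equivFunOnFinite.symm fun i => (g i + ∑ j, (g j).natAbs).toNat,
    funext fun i => ?_⟩
  have hle : |g i| ≤ ∑ j, |g j| :=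
    Finset.single_le_sum (f := fun j => |g j|) (fun j _ => abs_nonneg _) (Finset.mem_univ i)
  have hnonneg : 0 ≤ g i + ∑ j, |g j| := by linarith [neg_abs_le (g i)]
  simpa [natCastExponent] using hnonneg

def ofMvPolynomial : MvPolynomial (Fin d) ℤ →+* LaurentR d :=
  AddMonoidAlgebra.mapDomainRingHom ℤ (natCastExponent d)

instance : Algebra (MvPolynomial (Fin d) ℤ) (LaurentR d) := (ofMvPolynomial d).toAlgebra

theorem algebraMap_monomial (e : Fin d →₀ ℕ) (c : ℤ) :
    algebraMap (MvPolynomial (Fin d) ℤ) (LaurentR d) (MvPolynomial.monomial e c)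
      = AddMonoidAlgebra.single (natCastExponent d e) c :=
  AddMonoidAlgebra.mapDomain_single

def prodX : MvPolynomial (Fin d) ℤ := MvPolynomial.monomial (Finsupp.equivFunOnFinite.symm 1) 1

theorem algebraMap_prodX_pow (N : ℕ) :
    algebraMap (MvPolynomial (Fin d) ℤ) (LaurentR d) (prodX d) ^ N
      = AddMonoidAlgebra.single (N • 1) 1 := by
  rw [prodX, algebraMap_monomial, AddMonoidAlgebra.single_pow, one_pow]
  congr 1

theorem isUnit_single_one (g : Fin d → ℤ) : IsUnit (AddMonoidAlgebra.single g 1 : LaurentR d) :=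
  (Group.isUnit (Multiplicative.ofAdd g)).map (AddMonoidAlgebra.of ℤ (Fin d → ℤ))

theorem algebraMap_injective :
    Function.Injective (algebraMap (MvPolynomial (Fin d) ℤ) (LaurentR d)) :=
  AddMonoidAlgebra.mapDomain_injective (natCastExponent_injective d)

theorem exists_mul_algebraMap_prodX_pow_eq (z : LaurentR d) :
    ∃ (N : ℕ) (a : MvPolynomial (Fin d) ℤ),
      z * algebraMap _ (LaurentR d) (prodX d) ^ N = algebraMap _ (LaurentR d) a := by
  induction z using AddMonoidAlgebra.induction_linear with
  | zero => exact ⟨0, 0, by simp⟩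
  | add z₁ z₂ h₁ h₂ =>
    obtain ⟨N₁, a₁, h₁⟩ := h₁
    obtain ⟨N₂, a₂, h₂⟩ := h₂
    refine ⟨N₁ + N₂, a₁ * prodX d ^ N₂ + a₂ * prodX d ^ N₁, ?_⟩
    rw [map_add, map_mul, map_mul, map_pow, map_pow, ← h₁, ← h₂]
    ring
  | single g c =>
    obtain ⟨N, e, he⟩ := exists_natCastExponent_eq_add d g
    refine ⟨N, MvPolynomial.monomial e c, ?_⟩
    rw [algebraMap_prodX_pow, AddMonoidAlgebra.single_mul_single, mul_one, algebraMap_monomial, he]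

instance : IsLocalization.Away (prodX d) (LaurentR d) := by
  refine IsLocalization.Away.mk _ ?_ (exists_mul_algebraMap_prodX_pow_eq d)
    fun a b h => ⟨0, by rw [algebraMap_injective d h]⟩
  rw [← pow_one (algebraMap _ _ (prodX d)), algebraMap_prodX_pow, one_smul]
  exact isUnit_single_one d 1

instance : IsNoetherianRing (LaurentR d) :=
  IsLocalization.isNoetherianRing (Submonoid.powers (prodX d)) _ inferInstance

instance : UniqueFactorizationMonoid (LaurentR d) :=
  .of_isLocalization (Submonoid.powers (prodX d)) _

end LaurentR

theorem exists_not_isUnit_forall_dvd_of_dvd_mul {α : Type*} [CommMonoidWithZero α]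
    [GCDMonoid α] {a c : α} (ha : a ≠ 0) (hac : ¬a ∣ c) :
    ∃ b : α, ¬IsUnit b ∧ ∀ p, a ∣ p * c → b ∣ p := by
  obtain ⟨a', c', ha', hc', hu⟩ := extract_gcd a c
  set g := gcd a c
  have hg : g ≠ 0 := gcd_ne_zero_of_left ha
  refine ⟨a', fun ha'u => hac ?_, fun p hp => ?_⟩
  · rw [ha', ha'u.mul_right_dvd]
    exact gcd_dvd_right a c
  · rw [ha', hc', mul_left_comm, mul_dvd_mul_iff_left hg] at hp
    exact (gcd_isUnit_iff_isRelPrime.mp hu).dvd_of_dvd_mul_right hp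

theorem Ideal.IsPrime.exists_prime_eq_span_of_le_span {R : Type*} [CommRing R] [IsDomain R]
    [UniqueFactorizationMonoid R] {P : Ideal R} (hP : P.IsPrime) (hP0 : P ≠ ⊥) {b : R}
    (hb : ¬IsUnit b) (hPb : P ≤ Ideal.span {b}) : ∃ q, Prime q ∧ P = Ideal.span {q} := by
  obtain ⟨q, hqP, hq⟩ := hP.exists_mem_prime_of_ne_bot hP0
  have hbq : Associated q b :=
    (hq.irreducible.dvd_iff.mp (Ideal.mem_span_singleton.mp (hPb hqP))).resolve_left hb
  refine ⟨q, hq, le_antisymm ?_ ((Ideal.span_singleton_le_iff_mem P).mpr hqP)⟩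
  exact hPb.trans (Ideal.span_singleton_le_span_singleton.mpr hbq.dvd)

namespace Matrix

variable {R n : Type*} [CommRing R] [Fintype n] [DecidableEq n] (A : Matrix n n R)

theorem det_smul_mem_range_mulVecLin (x : n → R) :
    A.det • x ∈ LinearMap.range A.mulVecLin :=
  ⟨A.adjugate *ᵥ x, by simp [mulVec_mulVec, mul_adjugate, smul_mulVec, one_mulVec]⟩

theorem det_dvd_pow_card_of_forall_smul_mem_range {m : R}
    (hm : ∀ v : n → R, m • v ∈ LinearMap.range A.mulVecLin) : A.det ∣ m ^ Fintype.card n := by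
  choose y hy using fun j => hm (Pi.single j 1)
  have hAY : A * (of y)ᵀ = m • 1 := by
    ext i j
    simpa [mul_apply, mulVec, dotProduct, Pi.single_apply, one_apply, eq_comm]
      using congrFun (hy j) i
  exact ⟨(of y)ᵀ.det, by rw [← det_mul, hAY, det_smul, det_one, mul_one]⟩

theorem mem_range_mulVecLin_iff_forall_det_dvd [IsDomain R] (hA : A.det ≠ 0) {x : n → R} :
    x ∈ LinearMap.range A.mulVecLin ↔ ∀ i, A.det ∣ (A.adjugate *ᵥ x) i := by
  constructor
  · rintro ⟨y, rfl⟩ i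
    simp [mulVec_mulVec, adjugate_mul, smul_mulVec, one_mulVec]
  · intro h
    choose z hz using h
    refine ⟨z, smul_right_injective _ hA ?_⟩
    have hz' : A.adjugate *ᵥ x = A.det • z := funext fun i => by simp [hz i]
    simp only [mulVecLin_apply]
    rw [← mulVec_smul, ← hz', mulVec_mulVec, mul_adjugate, smul_mulVec, one_mulVec]

theorem exists_prime_eq_span_of_isAssociatedPrime [IsDomain R] [IsNoetherianRing R]
    [UniqueFactorizationMonoid R] (hA : A.det ≠ 0) {P : Ideal R}
    (hP : IsAssociatedPrime P ((n → R) ⧸ LinearMap.range A.mulVecLin)) :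
    ∃ π, Prime π ∧ π ∣ A.det ∧ P = Ideal.span {π} := by
  let := UniqueFactorizationMonoid.toGCDMonoid R
  obtain ⟨hPprime, x', hPx⟩ := isAssociatedPrime_iff.mp hP
  obtain ⟨x, rfl⟩ := Submodule.Quotient.mk_surjective _ x'
  have hmem : ∀ p, p ∈ P ↔ ∀ i, A.det ∣ p * (A.adjugate *ᵥ x) i := fun p => by
    rw [hPx, Submodule.mem_colon_singleton, Submodule.mem_bot, ← Submodule.Quotient.mk_smul,
      Submodule.Quotient.mk_eq_zero, mem_range_mulVecLin_iff_forall_det_dvd A hA, mulVec_smul]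
    rfl
  obtain ⟨i, hi⟩ : ∃ i, ¬A.det ∣ (A.adjugate *ᵥ x) i := by
    by_contra! h
    exact hPprime.ne_top ((Ideal.eq_top_iff_one P).mpr ((hmem 1).mpr (by simpa using h)))
  obtain ⟨b, hb, hbdvd⟩ := exists_not_isUnit_forall_dvd_of_dvd_mul hA hi
  have hdet : A.det ∈ P := (hmem _).mpr fun j => dvd_mul_right _ _
  have hP0 : P ≠ ⊥ := fun h => hA (by simpa [h] using hdet)
  obtain ⟨π, hπ, hPπ⟩ := hPprime.exists_prime_eq_span_of_le_span hP0 hb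
    fun p hp => Ideal.mem_span_singleton.mpr (hbdvd p ((hmem p).mp hp i))
  exact ⟨π, hπ, Ideal.mem_span_singleton.mp (hPπ ▸ hdet), hPπ⟩

theorem not_isSMulRegular_of_prime_dvd_det [IsDomain R] [WfDvdMonoid R] (hA : A.det ≠ 0) {π : R}
    (hπ : Prime π) (hπA : π ∣ A.det) :
    ¬IsSMulRegular ((n → R) ⧸ LinearMap.range A.mulVecLin) π := by
  intro hreg
  obtain ⟨e, m, hπm, hdet⟩ := WfDvdMonoid.max_power_factor hA hπ.irreducible
  have hm : ∀ v : n → R, m • v ∈ LinearMap.range A.mulVecLin := fun v => by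
    rw [← Submodule.Quotient.mk_eq_zero]
    refine (hreg.pow e).right_eq_zero_of_smul ?_
    rw [← Submodule.Quotient.mk_smul, smul_smul, ← hdet, Submodule.Quotient.mk_eq_zero]
    exact A.det_smul_mem_range_mulVecLin v
  exact hπm (hπ.dvd_of_dvd_pow (hπA.trans (A.det_dvd_pow_card_of_forall_smul_mem_range hm)))

theorem associatedPrimes_quotient_range_mulVecLin [IsDomain R] [IsNoetherianRing R]
    [UniqueFactorizationMonoid R] (hA : A.det ≠ 0) :
    associatedPrimes R ((n → R) ⧸ LinearMap.range A.mulVecLin)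
      = {P | ∃ π : R, Irreducible π ∧ π ∣ A.det ∧ P = Ideal.span {π}} := by
  ext P
  constructor
  · intro hP
    obtain ⟨π, hπ, hπA, rfl⟩ := A.exists_prime_eq_span_of_isAssociatedPrime hA hP
    exact ⟨π, hπ.irreducible, hπA, rfl⟩
  · rintro ⟨π, hπ, hπA, rfl⟩
    obtain ⟨x, hπx, hx0⟩ : ∃ x : (n → R) ⧸ LinearMap.range A.mulVecLin, π • x = 0 ∧ x ≠ 0 := by
      simpa [isSMulRegular_iff_right_eq_zero_of_smul] using
        A.not_isSMulRegular_of_prime_dvd_det hA hπ.prime hπA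
    have : π ∈ ⋃ Q ∈ associatedPrimes R ((n → R) ⧸ LinearMap.range A.mulVecLin), (Q : Set R) := by
      rw [biUnion_associatedPrimes_eq_zero_divisors]
      exact ⟨x, hx0, hπx⟩
    obtain ⟨Q, hQ, hπQ⟩ := Set.mem_iUnion₂.mp this
    obtain ⟨π', hπ', -, rfl⟩ := A.exists_prime_eq_span_of_isAssociatedPrime hA hQ
    have hassoc : Associated π' π :=
      hπ'.irreducible.associated_of_dvd hπ (Ideal.mem_span_singleton.mp hπQ)
    rwa [← Ideal.span_singleton_eq_span_singleton.mpr hassoc]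

end Matrix

theorem associated_primes_of_square_presentation (d k : ℕ)
    (A : Matrix (Fin k) (Fin k) (LaurentR d)) (hA : A.det ≠ 0) :
    associatedPrimes (LaurentR d) (MA A)
      = {P : Ideal (LaurentR d) | ∃ π : LaurentR d,
          Irreducible π ∧ π ∣ A.det ∧ P = Ideal.span {π}} := by
  have hcolSpan : colSpan A = LinearMap.range A.mulVecLin := (Matrix.range_mulVecLin A).symm
  unfold MA
  rw [hcolSpan]
  exact A.associatedPrimes_quotient_range_mulVecLin hA
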